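/- The following are equivalent: (1) for all x, y ∈ M, if I⁺(x) = I⁺(y) and I⁻(x) = I⁻(y) then x = y (weak distinction); (2) the relation D⁺ is antisymmetric. -/

import Mathlib

/-!
Openness and transitivity of `I` give `y ∈ cl(I⁺(x)) → I⁺(y) ⊆ I⁺(x)`, and `y ∈ cl(I⁺(y))` gives
the converse, so `(x, y) ∈ D⁺` exactly when `I⁺(y) ⊆ I⁺(x)` and `I⁻(x) ⊆ I⁻(y)`. Antisymmetry of
`D⁺` is therefore injectivity of `x ↦ (I⁺(x), I⁻(x))`, i.e. weak distinction.
-/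

open Set Topology

/-- The chronological future of `x`: `I⁺(x) = {y | (x,y) ∈ I}`. -/
def chronFuture {M : Type*} (I : Set (M × M)) (x : M) : Set M := {y | (x, y) ∈ I}

/-- The chronological past of `y`: `I⁻(y) = {x | (x,y) ∈ I}`. -/
def chronPast {M : Type*} (I : Set (M × M)) (y : M) : Set M := {x | (x, y) ∈ I}

/-- `D⁺_f = {(x,y) : y ∈ cl(I⁺(x))}`. -/
def Dfut {M : Type*} [TopologicalSpace M] (I : Set (M × M)) : Set (M × M) :=
  {p | p.2 ∈ closure (chronFuture I p.1)}

/-- `D⁺_p = {(x,y) : x ∈ cl(I⁻(y))}`. -/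
def Dpast {M : Type*} [TopologicalSpace M] (I : Set (M × M)) : Set (M × M) :=
  {p | p.1 ∈ closure (chronPast I p.2)}

/-- `D⁺ = D⁺_f ∩ D⁺_p`. -/
def Dplus {M : Type*} [TopologicalSpace M] (I : Set (M × M)) : Set (M × M) :=
  Dfut I ∩ Dpast I

section Chronology

variable {M : Type*} [TopologicalSpace M] {I : Set (M × M)}

theorem isOpen_chronFuture (hI : IsOpen I) (x : M) : IsOpen (chronFuture I x) :=
  hI.preimage (Continuous.prodMk continuous_const continuous_id)

theorem isOpen_chronPast (hI : IsOpen I) (y : M) : IsOpen (chronPast I y) :=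
  hI.preimage (Continuous.prodMk continuous_id continuous_const)

theorem chronFuture_subset_of_mem_closure (hI : IsOpen I)
    (htrans : ∀ x y z : M, (x, y) ∈ I → (y, z) ∈ I → (x, z) ∈ I) {x y : M}
    (h : y ∈ closure (chronFuture I x)) : chronFuture I y ⊆ chronFuture I x := fun z hz =>
  let ⟨w, hwz, hxw⟩ := mem_closure_iff.mp h _ (isOpen_chronPast hI z) hz
  htrans x w z hxw hwz

theorem chronPast_subset_of_mem_closure (hI : IsOpen I)
    (htrans : ∀ x y z : M, (x, y) ∈ I → (y, z) ∈ I → (x, z) ∈ I) {x y : M}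
    (h : x ∈ closure (chronPast I y)) : chronPast I x ⊆ chronPast I y := fun z hz =>
  let ⟨w, hzw, hwy⟩ := mem_closure_iff.mp h _ (isOpen_chronFuture hI z) hz
  htrans z w y hzw hwy

theorem mem_Dfut_iff (hI : IsOpen I)
    (htrans : ∀ x y z : M, (x, y) ∈ I → (y, z) ∈ I → (x, z) ∈ I)
    (hself : ∀ x : M, x ∈ closure (chronFuture I x)) {x y : M} :
    (x, y) ∈ Dfut I ↔ chronFuture I y ⊆ chronFuture I x :=
  ⟨chronFuture_subset_of_mem_closure hI htrans, fun h => closure_mono h (hself y)⟩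

theorem mem_Dpast_iff (hI : IsOpen I)
    (htrans : ∀ x y z : M, (x, y) ∈ I → (y, z) ∈ I → (x, z) ∈ I)
    (hself : ∀ x : M, x ∈ closure (chronPast I x)) {x y : M} :
    (x, y) ∈ Dpast I ↔ chronPast I x ⊆ chronPast I y :=
  ⟨chronPast_subset_of_mem_closure hI htrans, fun h => closure_mono h (hself x)⟩

theorem mem_Dplus_iff (hI : IsOpen I)
    (htrans : ∀ x y z : M, (x, y) ∈ I → (y, z) ∈ I → (x, z) ∈ I)
    (hselfF : ∀ x : M, x ∈ closure (chronFuture I x))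
    (hselfP : ∀ x : M, x ∈ closure (chronPast I x)) {x y : M} :
    (x, y) ∈ Dplus I ↔ chronFuture I y ⊆ chronFuture I x ∧ chronPast I x ⊆ chronPast I y :=
  and_congr (mem_Dfut_iff hI htrans hselfF) (mem_Dpast_iff hI htrans hselfP)

end Chronology

/-- weak distinction iff `D⁺` is antisymmetric. -/
theorem weakly_dist_iff_dplus_antisymm {M : Type*} [TopologicalSpace M] (I : Set (M × M))
    (hIopen : IsOpen I)
    (hItrans : ∀ x y z : M, (x, y) ∈ I → (y, z) ∈ I → (x, z) ∈ I)
    (hselfF : ∀ x : M, x ∈ closure (chronFuture I x))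
    (hselfP : ∀ x : M, x ∈ closure (chronPast I x)) :
    (∀ x y : M, chronFuture I x = chronFuture I y → chronPast I x = chronPast I y → x = y) ↔
    (∀ x y : M, (x, y) ∈ Dplus I → (y, x) ∈ Dplus I → x = y) := by
  simp only [mem_Dplus_iff hIopen hItrans hselfF hselfP]
  constructor
  · rintro hdist x y ⟨hFyx, hPxy⟩ ⟨hFxy, hPyx⟩
    exact hdist x y (hFxy.antisymm hFyx) (hPxy.antisymm hPyx)
  · rintro hanti x y hF hP
    exact hanti x y ⟨hF.ge, hP.le⟩ ⟨hF.le, hP.ge⟩
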